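/- There exists exactly one function a : ℕ → ℕ with a(0) = 0 such that for every n ≥ 1, a(n) equals the coefficient of X^n in the formal power series X + X²·∏_{i=1}^{n} (1 − a(i)·X^i)⁻¹ in ℤ⟦X⟧. Moreover this unique function satisfies a(1) = 1 and a(2) = 1. -/

import Mathlib

/-!
For `i ≠ 0` the factor `(1 - c Xⁱ)⁻¹` is the geometric series `∑ cᵏ X^{ik}`: it is `≡ 1 mod Xⁱ`
and has nonnegative coefficients when `c ≥ 0`. Since the product is multiplied by `X²`, the
coefficient of `Xⁿ` only sees the product modulo `Xⁿ`, to which the factor `i = n` contributes `1`;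
so the condition is a strong recursion `a n = F n (a restricted to [0, n))`, which has exactly one
solution, and nonnegativity makes all its values natural numbers. The coefficients of `X` and `X²`
are `1` and the constant coefficient of the product, i.e. `1`.
-/

open PowerSeries Finset

theorem Nat.existsUnique_strongRecursion {α : Type*} [Nonempty α] (F : ℕ → (ℕ → α) → α)
    (hF : ∀ n a b, (∀ m < n, a m = b m) → F n a = F n b) :
    ∃! a : ℕ → α, ∀ n, a n = F n a := by
  classical
  let a : ℕ → α := Nat.lt_wfRel.wf.fix fun n rec =>
    F n fun m => if h : m < n then rec m h else Classical.arbitrary α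
  have ha : ∀ n, a n = F n a := fun n =>
    (Nat.lt_wfRel.wf.fix_eq _ n).trans (hF n _ _ fun m hm => dif_pos hm)
  refine ⟨a, ha, fun b hb => funext fun n => ?_⟩
  induction n using Nat.strong_induction_on with
  | _ n ih => rw [hb n, ha n]; exact hF n b a ih

namespace PowerSeries

variable {R : Type*} [CommRing R]

theorem isUnit_one_sub_C_mul_X_pow (c : R) {i : ℕ} (hi : i ≠ 0) :
    IsUnit (1 - C c * X ^ i : R⟦X⟧) := by
  simp [isUnit_iff_constantCoeff, hi]

theorem inverse_one_sub_C_mul_X_pow (c : R) {i : ℕ} (hi : i ≠ 0) :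
    Ring.inverse (1 - C c * X ^ i) = expand i hi (rescale c (mk 1)) := by
  rw [← one_mul (Ring.inverse _), eq_comm,
    Ring.eq_mul_inverse_iff_mul_eq _ _ _ (isUnit_one_sub_C_mul_X_pow c hi)]
  have hfactor : (1 - C c * X ^ i : R⟦X⟧) = expand i hi (rescale c (1 - X)) := by
    simp [rescale_X, expand_C]
  rw [hfactor, ← map_mul, ← map_mul, mk_one_mul_one_sub_eq_one, map_one, map_one]

theorem coeff_inverse_one_sub_C_mul_X_pow (c : R) {i : ℕ} (hi : i ≠ 0) (n : ℕ) :
    coeff n (Ring.inverse (1 - C c * X ^ i)) = if i ∣ n then c ^ (n / i) else 0 := by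
  simp [inverse_one_sub_C_mul_X_pow c hi, coeff_expand, coeff_rescale]

theorem X_pow_dvd_inverse_one_sub_C_mul_X_pow_sub_one (c : R) {i k : ℕ} (hi : i ≠ 0)
    (hk : k ≤ i) : X ^ k ∣ Ring.inverse (1 - C c * X ^ i) - 1 := by
  have hsub : Ring.inverse (1 - C c * X ^ i) - 1 =
      Ring.inverse (1 - C c * X ^ i) * C c * X ^ i := by
    linear_combination Ring.inverse_mul_cancel _ (isUnit_one_sub_C_mul_X_pow c hi)
  rw [hsub]
  exact (pow_dvd_pow X hk).mul_left _

theorem X_pow_dvd_prod_inverse_sub_prod_inverse {c d : ℕ → R} {s : Finset ℕ} {k : ℕ}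
    (hs : ∀ i ∈ s, i ≠ 0) (hcd : ∀ i ∈ s, i < k → c i = d i) :
    X ^ k ∣ ∏ i ∈ s, Ring.inverse (1 - C (c i) * X ^ i) -
      ∏ i ∈ s, Ring.inverse (1 - C (d i) * X ^ i) := by
  have hone : ∀ e : R, ∀ i ∈ s, k ≤ i → Ideal.Quotient.mk (Ideal.span {X ^ k})
      (Ring.inverse (1 - C e * X ^ i)) = 1 := fun e i hi hki => by
    rw [← map_one (Ideal.Quotient.mk _), Ideal.Quotient.eq, Ideal.mem_span_singleton]
    exact X_pow_dvd_inverse_one_sub_C_mul_X_pow_sub_one e (hs i hi) hki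
  rw [← Ideal.mem_span_singleton, ← Ideal.Quotient.eq, map_prod, map_prod]
  refine prod_congr rfl fun i hi => ?_
  rcases lt_or_ge i k with hik | hki
  · rw [hcd i hi hik]
  · rw [hone _ i hi hki, hone _ i hi hki]

theorem mem_rangeS_map_natCast_iff {f : ℤ⟦X⟧} :
    f ∈ (map (Nat.castRingHom ℤ)).rangeS ↔ ∀ n, 0 ≤ coeff n f := by
  refine ⟨?_, fun hf => ⟨mk fun n => (coeff n f).toNat, ?_⟩⟩
  · rintro ⟨g, rfl⟩ n
    simp [coeff_map]
  · ext n
    simp [coeff_map, Int.toNat_of_nonneg (hf n)]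

end PowerSeries

namespace A345973

noncomputable def series (a : ℕ → ℕ) (n : ℕ) : ℤ⟦X⟧ :=
  X + X ^ 2 * ∏ i ∈ Icc 1 n, Ring.inverse (1 - C (a i : ℤ) * X ^ i)

def IsSolution (a : ℕ → ℕ) : Prop :=
  a 0 = 0 ∧ ∀ n, 1 ≤ n → (a n : ℤ) = coeff n (series a n)

-- `toNat` loses nothing on solutions: the coefficient is nonnegative by `series_mem_rangeS`.
noncomputable def next (n : ℕ) (a : ℕ → ℕ) : ℕ :=
  if n = 0 then 0 else (coeff n (series a n)).toNat

theorem coeff_series_congr {a b : ℕ → ℕ} {n : ℕ} (hab : ∀ m < n, a m = b m) :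
    coeff n (series a n) = coeff n (series b n) := by
  have hprod := X_pow_dvd_prod_inverse_sub_prod_inverse (R := ℤ) (s := Icc 1 n) (k := n)
    (c := fun i => (a i : ℤ)) (d := fun i => (b i : ℤ))
    (fun i hi => Nat.pos_iff_ne_zero.1 (mem_Icc.1 hi).1) fun i _ hi => by rw [hab i hi]
  have hdvd : X ^ (2 + n) ∣ series a n - series b n := by
    rw [series, series, add_sub_add_left_eq_sub, ← mul_sub, pow_add]
    exact mul_dvd_mul_left _ hprod
  rw [← sub_eq_zero, ← map_sub]
  exact X_pow_dvd_iff.1 hdvd n (by omega)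

theorem series_mem_rangeS (a : ℕ → ℕ) (n : ℕ) :
    series a n ∈ (map (Nat.castRingHom ℤ)).rangeS := by
  refine add_mem ⟨X, map_X _⟩ (mul_mem ⟨X ^ 2, by simp⟩ (prod_mem fun i hi => ?_))
  rw [mem_rangeS_map_natCast_iff]
  intro m
  rw [coeff_inverse_one_sub_C_mul_X_pow _ (Nat.pos_iff_ne_zero.1 (mem_Icc.1 hi).1)]
  split_ifs <;> positivity

theorem isSolution_iff {a : ℕ → ℕ} : IsSolution a ↔ ∀ n, a n = next n a := by
  refine ⟨fun ⟨h0, h⟩ n => ?_, fun h => ⟨h 0, fun n hn => ?_⟩⟩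
  · rcases Nat.eq_zero_or_pos n with rfl | hn
    · exact h0
    · rw [next, if_neg hn.ne', ← h n hn, Int.toNat_natCast]
  · rw [h n, next, if_neg (by omega),
      Int.toNat_of_nonneg (mem_rangeS_map_natCast_iff.1 (series_mem_rangeS a n) n)]

theorem IsSolution.apply_one {a : ℕ → ℕ} (ha : IsSolution a) : a 1 = 1 := by
  have h1 := ha.2 1 le_rfl
  rw [series, map_add, coeff_X, if_pos rfl, coeff_X_pow_mul', if_neg (by norm_num),
    add_zero] at h1
  exact_mod_cast h1

theorem IsSolution.apply_two {a : ℕ → ℕ} (ha : IsSolution a) : a 2 = 1 := by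
  have h2 := ha.2 2 (by norm_num)
  rw [series, map_add, coeff_X, coeff_X_pow_mul', if_pos le_rfl, Nat.sub_self,
    coeff_zero_eq_constantCoeff_apply, map_prod, prod_eq_one fun i hi => ?_] at h2
  · exact_mod_cast h2
  · rw [← coeff_zero_eq_constantCoeff_apply,
      coeff_inverse_one_sub_C_mul_X_pow _ (Nat.pos_iff_ne_zero.1 (mem_Icc.1 hi).1)]
    simp

end A345973

/-- There is exactly one function `a : ℕ → ℕ` with `a 0 = 0` satisfying
`a n = [X^n] (X + X² ∏_{i=1}^{n} (1 - a i · X^i)⁻¹)` in `ℤ⟦X⟧` for all `n ≥ 1`,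
and this unique function satisfies `a 1 = 1` and `a 2 = 1`. -/
theorem stmt_5 :
    (∃! a : ℕ → ℕ, a 0 = 0 ∧ ∀ n : ℕ, 1 ≤ n →
        (a n : ℤ) = PowerSeries.coeff (R := ℤ) n
          ((PowerSeries.X : ℤ⟦X⟧) + (PowerSeries.X : ℤ⟦X⟧) ^ 2 *
            ∏ i ∈ Finset.Icc 1 n,
              Ring.inverse (1 - PowerSeries.C (R := ℤ) (a i : ℤ) * (PowerSeries.X : ℤ⟦X⟧) ^ i)))
      ∧ ∀ a : ℕ → ℕ, (a 0 = 0 ∧ ∀ n : ℕ, 1 ≤ n →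
        (a n : ℤ) = PowerSeries.coeff (R := ℤ) n
          ((PowerSeries.X : ℤ⟦X⟧) + (PowerSeries.X : ℤ⟦X⟧) ^ 2 *
            ∏ i ∈ Finset.Icc 1 n,
              Ring.inverse (1 - PowerSeries.C (R := ℤ) (a i : ℤ) * (PowerSeries.X : ℤ⟦X⟧) ^ i)))
        → a 1 = 1 ∧ a 2 = 1 := by
  have hunique : ∃! a, A345973.IsSolution a :=
    (existsUnique_congr fun _ => A345973.isSolution_iff).2 <|
      Nat.existsUnique_strongRecursion A345973.next fun n a b hab => by
        simp only [A345973.next, A345973.coeff_series_congr hab]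
  exact ⟨hunique, fun a ha =>
    ⟨A345973.IsSolution.apply_one ha, A345973.IsSolution.apply_two ha⟩⟩
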